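/- Let H be a graph on n vertices containing an odd cycle, with ℓ the length of a shortest odd cycle of H, and let G = W(H). If 1 ≤ q < ⌈ℓ/2⌉ or n − ⌊ℓ/2⌋ < q ≤ ν(G), then MF^q(G) is pure, i.e., every facet has cardinality n + q − 1. -/

import Mathlib

variable {V : Type*}

/-- `M` is a set of pairwise disjoint edges of `G` with all endpoints in `F`. -/
def IsMatchingOn (G : SimpleGraph V) (F : Finset V) (M : Finset (Sym2 V)) : Prop :=
  (∀ e ∈ M, e ∈ G.edgeSet) ∧
  (∀ e ∈ M, ∀ v ∈ e, v ∈ F) ∧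
  (∀ e ∈ M, ∀ e' ∈ M, e ≠ e' → ∀ v ∈ e, v ∉ e')

/-- `F` is a face of the `q`-matching-free complex `MF^q(G)`. -/
def MFFace (G : SimpleGraph V) (q : ℕ) (F : Finset V) : Prop :=
  ¬ ∃ M : Finset (Sym2 V), IsMatchingOn G F M ∧ M.card = q

/-- `F` is a facet (maximal face) of the complex with face predicate `faces`. -/
def IsFacet (faces : Finset V → Prop) (F : Finset V) : Prop :=
  faces F ∧ ∀ F', faces F' → F ⊆ F' → F = F'

/-- Even-connection of `u` and `v` with respect to the pairwise disjoint edges in `M`. -/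
def EvenConnected (G : SimpleGraph V) (M : Finset (Sym2 V)) (u v : V) : Prop :=
  ∃ (r : ℕ) (p : ℕ → V), 1 ≤ r ∧ p 0 = u ∧ p (2 * r + 1) = v ∧
    (∀ k, k ≤ 2 * r → G.Adj (p k) (p (k + 1))) ∧
    (∀ k, k < r → s(p (2 * k + 1), p (2 * k + 2)) ∈ M) ∧
    (∀ k l, k < r → l < r →
      s(p (2 * k + 1), p (2 * k + 2)) = s(p (2 * l + 1), p (2 * l + 2)) → k = l)

/-- The set of vertices covered by the edges in `M`. -/
def mSupp (M : Finset (Sym2 V)) : Set V := {v | ∃ e ∈ M, v ∈ e}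

/-- The even-connection graph `G^{e₁⋯e_q}` (vertices covered by `M` are isolated). -/
def evenConnGraph (G : SimpleGraph V) (M : Finset (Sym2 V)) : SimpleGraph V where
  Adj x y := x ≠ y ∧ x ∉ mSupp M ∧ y ∉ mSupp M ∧
    (G.Adj x y ∨ EvenConnected G M x y ∨ EvenConnected G M y x)
  symm := by
    constructor
    rintro x y ⟨hne, hx, hy, h⟩
    refine ⟨hne.symm, hy, hx, ?_⟩
    rcases h with h | h | h
    · exact Or.inl h.symm
    · exact Or.inr (Or.inr h)
    · exact Or.inr (Or.inl h)
  loopless := ⟨fun x h => h.1 rfl⟩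

/-- Delete a set of vertices from a graph (keeping them as isolated vertices). -/
def delSet (G : SimpleGraph V) (S : Set V) : SimpleGraph V where
  Adj x y := G.Adj x y ∧ x ∉ S ∧ y ∉ S
  symm := ⟨fun x y ⟨h, hx, hy⟩ => ⟨h.symm, hy, hx⟩⟩
  loopless := ⟨fun x ⟨h, _, _⟩ => G.loopless.irrefl x h⟩

/-- The whisker graph `W(H)`: each vertex `x` (as `Sum.inl x`) gets a pendant
whisker vertex `Sum.inr x`. -/
def whisker (H : SimpleGraph V) : SimpleGraph (V ⊕ V) where
  Adj x y :=
    (∃ a b, x = Sum.inl a ∧ y = Sum.inl b ∧ H.Adj a b) ∨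
    (∃ a, (x = Sum.inl a ∧ y = Sum.inr a) ∨ (x = Sum.inr a ∧ y = Sum.inl a))
  symm := by
    constructor
    rintro x y (⟨a, b, hx, hy, hab⟩ | ⟨a, h | h⟩)
    · exact Or.inl ⟨b, a, hy, hx, hab.symm⟩
    · exact Or.inr ⟨a, Or.inr ⟨h.2, h.1⟩⟩
    · exact Or.inr ⟨a, Or.inl ⟨h.2, h.1⟩⟩
  loopless := by
    constructor
    rintro x (⟨a, b, hx, hy, hab⟩ | ⟨a, ⟨h1, h2⟩ | ⟨h1, h2⟩⟩)
    · obtain rfl := Sum.inl_injective (hx ▸ hy : (Sum.inl a : V ⊕ V) = Sum.inl b)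
      exact H.loopless.irrefl a hab
    · exact Sum.inl_ne_inr (h1 ▸ h2 : (Sum.inl a : V ⊕ V) = Sum.inr a)
    · exact Sum.inr_ne_inl (h1 ▸ h2 : (Sum.inr a : V ⊕ V) = Sum.inl a)

/-- Shellability of the complex with face predicate `faces`: there is a linear
order `F 0, F 1, …` of all facets such that each facet meets the union of the
previous ones in a pure subcomplex of codimension one. -/
def Shellable (faces : Finset V → Prop) : Prop :=
  ∃ (t : ℕ) (F : Fin t → Finset V),
    (∀ i, IsFacet faces (F i)) ∧
    (∀ F', IsFacet faces F' → ∃ i, F' = F i) ∧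
    Function.Injective F ∧
    ∀ k : Fin t, 0 < (k : ℕ) → ∀ σ : Finset V, σ ⊆ F k →
      (∃ i, i < k ∧ σ ⊆ F i) →
      ∃ τ : Finset V, σ ⊆ τ ∧ τ ⊆ F k ∧ (∃ i, i < k ∧ τ ⊆ F i) ∧
        τ.card = (F k).card - 1

/-- Vertex decomposability of the complex with face predicate `faces`. -/
inductive VertexDecomposable [DecidableEq V] : (Finset V → Prop) → Prop
  | simplex (faces : Finset V → Prop) (F : Finset V)
      (h : ∀ F', faces F' ↔ F' ⊆ F) : VertexDecomposable faces
  | shed (faces : Finset V → Prop) (v : V)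
      (hdel : VertexDecomposable (fun F => faces F ∧ v ∉ F))
      (hlink : VertexDecomposable (fun F => v ∉ F ∧ faces (insert v F)))
      (hshed : ∀ F, v ∉ F → faces (insert v F) →
        ¬ IsFacet (fun F' => faces F' ∧ v ∉ F') F) :
      VertexDecomposable faces

/-! Write `A` and `B` for the vertices of `H` whose copy, resp. whisker, lies in a facet `F`.
Maximality forces `A ∪ B = V`, so `|F| = n + |A ∩ B|`, and the whisker edges over `A ∩ B` give
`|A ∩ B| < q`. Adding a missing vertex to `F` creates a `q`-matching, so `W(H)[F]` has maximum
matchings of size `q - 1`, and for `a ∉ B` one of them exposes `a`. If two such vertices were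
adjacent in `H`, Gallai's alternating-path argument would put them on an odd cycle of `H`, of
length `2r + 1 ≥ ℓ`, that a maximum matching covers up to one vertex; counting gives
`r < q ≤ n - r`, which excludes both ranges of `q`. Hence every edge of `W(H)[F]` meets `A ∩ B`,
and `q - 1 ≤ |A ∩ B|`. -/

open Finset SimpleGraph

lemma mem_mSupp {M : Finset (Sym2 V)} {x : V} : x ∈ mSupp M ↔ ∃ e ∈ M, x ∈ e := Iff.rfl

lemma mSupp_mono {M M' : Finset (Sym2 V)} (h : M' ⊆ M) : mSupp M' ⊆ mSupp M :=
  fun _ ⟨e, he, hx⟩ => ⟨e, h he, hx⟩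

namespace IsMatchingOn

variable {G : SimpleGraph V} {F : Finset V} {M : Finset (Sym2 V)} {x y z : V}

lemma adj (hM : IsMatchingOn G F M) (h : s(x, y) ∈ M) : G.Adj x y := hM.1 _ h

lemma mem_of_mem (hM : IsMatchingOn G F M) {e : Sym2 V} (he : e ∈ M) (hx : x ∈ e) : x ∈ F :=
  hM.2.1 e he x hx

lemma eq_of_mem {e e' : Sym2 V} (hM : IsMatchingOn G F M) (he : e ∈ M) (he' : e' ∈ M)
    (hx : x ∈ e) (hx' : x ∈ e') : e = e' :=
  by_contra fun hne => hM.2.2 e he e' he' hne x hx hx'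

lemma right_eq (hM : IsMatchingOn G F M) (hy : s(x, y) ∈ M) (hz : s(x, z) ∈ M) : y = z :=
  Sym2.congr_right.1 (hM.eq_of_mem hy hz (Sym2.mem_mk_left x y) (Sym2.mem_mk_left x z))

lemma subset {M' : Finset (Sym2 V)} (hM : IsMatchingOn G F M) (h : M' ⊆ M) :
    IsMatchingOn G F M' :=
  ⟨fun e he => hM.1 e (h he), fun e he => hM.2.1 e (h he),
    fun e he e' he' => hM.2.2 e (h he) e' (h he')⟩

lemma card_le_card_of_forall_exists_mem (hM : IsMatchingOn G F M) {S : Finset V}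
    (hS : ∀ e ∈ M, ∃ v ∈ S, v ∈ e) : #M ≤ #S :=
  card_le_card_of_forall_subsingleton (fun e v => v ∈ e) hS
    fun _ _ _ he _ he' => hM.eq_of_mem he.1 he'.1 he.2 he'.2

variable [DecidableEq V]

lemma of_insert (hM : IsMatchingOn G (insert x F) M) (hx : x ∉ mSupp M) :
    IsMatchingOn G F M := by
  refine ⟨hM.1, fun e he v hv => ?_, hM.2.2⟩
  obtain rfl | h := mem_insert.1 (hM.2.1 e he v hv)
  exacts [absurd ⟨e, he, hv⟩ hx, h]

lemma insert_edge (hM : IsMatchingOn G F M) (hxy : G.Adj x y) (hx : x ∈ F) (hy : y ∈ F)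
    (hx' : x ∉ mSupp M) (hy' : y ∉ mSupp M) : IsMatchingOn G F (insert s(x, y) M) := by
  refine ⟨?_, ?_, ?_⟩
  · simpa [forall_mem_insert] using ⟨hxy, hM.1⟩
  · simp only [forall_mem_insert]
    exact ⟨fun v hv => by rcases Sym2.mem_iff.1 hv with rfl | rfl <;> assumption, hM.2.1⟩
  · simp only [mem_insert, mem_mSupp, not_exists, not_and] at *
    rintro e (rfl | he) e' (rfl | he') hne v hv hv'
    · exact hne rfl
    · rcases Sym2.mem_iff.1 hv with rfl | rfl
      exacts [hx' e' he' hv', hy' e' he' hv']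
    · rcases Sym2.mem_iff.1 hv' with rfl | rfl
      exacts [hx' e he hv, hy' e he hv]
    · exact hM.2.2 e he e' he' hne v hv hv'

lemma notMem_mSupp_erase (hM : IsMatchingOn G F M) {e : Sym2 V} (he : e ∈ M) (hx : x ∈ e) :
    x ∉ mSupp (M.erase e) := fun ⟨_, he', hx'⟩ =>
  ne_of_mem_erase he' (hM.eq_of_mem (mem_of_mem_erase he') he hx' hx)

/-- Trading the matched edge `p 1 p 2` for `p 0 p 1` keeps the size of `M` and leaves the
shorter augmenting path `p 2, …, p (2r+1)`. -/
lemma exists_card_eq_add_one_of_augmenting (hM : IsMatchingOn G F M) (r : ℕ) (p : ℕ → V)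
    (hinj : Set.InjOn p (Set.Iic (2 * r + 1))) (hF : ∀ i ≤ 2 * r + 1, p i ∈ F)
    (hadj : ∀ i ≤ 2 * r, G.Adj (p i) (p (i + 1)))
    (hstart : p 0 ∉ mSupp M) (hend : p (2 * r + 1) ∉ mSupp M)
    (hmatched : ∀ i < r, s(p (2 * i + 1), p (2 * i + 2)) ∈ M) :
    ∃ M', IsMatchingOn G F M' ∧ #M' = #M + 1 := by
  induction r generalizing M p with
  | zero =>
    refine ⟨_, hM.insert_edge (hadj 0 le_rfl) (hF 0 (by omega)) (hF 1 le_rfl) hstart hend, ?_⟩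
    exact card_insert_of_notMem fun h => hstart ⟨_, h, Sym2.mem_mk_left _ _⟩
  | succ r ih =>
    have hne : ∀ i j, i ≤ 2 * r + 3 → j ≤ 2 * r + 3 → i ≠ j → p i ≠ p j := fun i j hi hj =>
      hinj.ne (Set.mem_Iic.2 hi) (Set.mem_Iic.2 hj)
    have h12 : s(p 1, p 2) ∈ M := hmatched 0 (by omega)
    set M₀ := M.erase s(p 1, p 2)
    have hM₀ : IsMatchingOn G F M₀ := hM.subset (erase_subset _ _)
    have hM₁ : IsMatchingOn G F (insert s(p 0, p 1) M₀) :=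
      hM₀.insert_edge (hadj 0 (by omega)) (hF 0 (by omega)) (hF 1 (by omega))
        (fun h => hstart (mSupp_mono (erase_subset _ _) h))
        (hM.notMem_mSupp_erase h12 (Sym2.mem_mk_left _ _))
    have hcard : #(insert s(p 0, p 1) M₀) = #M := by
      rw [card_insert_of_notMem fun h => hstart ⟨_, mem_of_mem_erase h, Sym2.mem_mk_left _ _⟩,
        card_erase_of_mem h12, Nat.sub_add_cancel (card_pos.2 ⟨_, h12⟩)]
    have hsupp : ∀ i, 2 ≤ i → i ≤ 2 * r + 3 → p i ∉ mSupp M₀ →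
        p i ∉ mSupp (insert s(p 0, p 1) M₀) := by
      rintro i hi2 hi ho ⟨e, he, hv⟩
      rcases mem_insert.1 he with rfl | he
      · rcases Sym2.mem_iff.1 hv with h | h
        exacts [hne i 0 hi (by omega) (by omega) h, hne i 1 hi (by omega) (by omega) h]
      · exact ho ⟨e, he, hv⟩
    obtain ⟨M', hM', hc⟩ := ih hM₁ (fun i => p (i + 2))
      (fun i hi j hj h => by
        have := hinj (Set.mem_Iic.2 (by simp at hi; omega)) (Set.mem_Iic.2 (by simp at hj; omega)) h
        omega)
      (fun i hi => hF _ (by omega)) (fun i hi => hadj _ (by omega))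
      (hsupp 2 le_rfl (by omega) (hM.notMem_mSupp_erase h12 (Sym2.mem_mk_right _ _)))
      (hsupp _ (by omega) le_rfl fun h => hend (mSupp_mono (erase_subset _ _) h))
      (fun i hi => by
        refine mem_insert_of_mem (mem_erase.2 ⟨fun h => ?_, hmatched (i + 1) (by omega)⟩)
        rcases Sym2.eq_iff.1 h with ⟨h1, -⟩ | ⟨h1, -⟩
        exacts [hne _ 1 (by omega) (by omega) (by omega) h1,
          hne _ 2 (by omega) (by omega) (by omega) h1])
    exact ⟨M', hM', by rw [hc, hcard]⟩

end IsMatchingOn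

lemma MFFace.card_lt {G : SimpleGraph V} {q : ℕ} {F : Finset V} {M : Finset (Sym2 V)}
    (hF : MFFace G q F) (hM : IsMatchingOn G F M) : #M < q := by
  by_contra! h
  obtain ⟨M', hM', rfl⟩ := exists_subset_card_eq h
  exact hF ⟨M', hM.subset hM', rfl⟩

lemma IsFacet.exists_adj_exposed_of_notMem [DecidableEq V] {G : SimpleGraph V} {q : ℕ}
    {F : Finset V} (hF : IsFacet (MFFace G q) F) {v : V} (hv : v ∉ F) :
    ∃ w M, G.Adj v w ∧ w ∈ F ∧ w ∉ mSupp M ∧ IsMatchingOn G F M ∧ #M + 1 = q := by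
  have hins : ¬MFFace G q (insert v F) := fun h =>
    hv ((hF.2 _ h (subset_insert _ _)).symm ▸ mem_insert_self v F)
  obtain ⟨M, hM, hMq⟩ := not_not.1 hins
  obtain ⟨e, he, hve⟩ : v ∈ mSupp M :=
    Classical.byContradiction fun h => hF.1 ⟨M, hM.of_insert h, hMq⟩
  obtain ⟨w, rfl⟩ := Sym2.mem_iff_exists.1 hve
  have hvw := hM.adj he
  refine ⟨w, M.erase s(v, w), hvw, ?_, hM.notMem_mSupp_erase he (Sym2.mem_mk_right _ _),
    (hM.subset (erase_subset _ _)).of_insert (hM.notMem_mSupp_erase he (Sym2.mem_mk_left _ _)),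
    ?_⟩
  · exact (mem_insert.1 (hM.mem_of_mem he (Sym2.mem_mk_right _ _))).resolve_left hvw.ne.symm
  · rw [card_erase_of_mem he, ← hMq, Nat.sub_add_cancel (card_pos.2 ⟨_, he⟩)]

lemma Set.InjOn.update_add_one {α : Type*} {p : ℕ → α} {k : ℕ} {w : α}
    (hinj : Set.InjOn p (Set.Iic k)) (hw : w ∉ p '' Set.Iic k) :
    Set.InjOn (Function.update p (k + 1) w) (Set.Iic (k + 1)) := by
  have heq : Set.EqOn p (Function.update p (k + 1) w) (Set.Iic k) := fun i hi =>
    (Function.update_of_ne (by simp at hi; omega) _ _).symm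
  rw [← Order.succ_eq_add_one, Order.Iic_succ, Order.succ_eq_add_one, Set.injOn_insert (by simp),
    ← heq.image_eq, Function.update_self]
  exact ⟨hinj.congr heq, hw⟩

/-- The matching that an `M`–`N` alternating path starting with an `M`-edge uses at step `i`. -/
def alternate (M N : Finset (Sym2 V)) (i : ℕ) : Finset (Sym2 V) := if Even i then M else N

lemma alternate_congr {M N : Finset (Sym2 V)} {i j : ℕ} (h : Even i ↔ Even j) :
    alternate M N i = alternate M N j := by
  simp only [alternate, h]

@[simp]
lemma alternate_two_mul (M N : Finset (Sym2 V)) (i : ℕ) : alternate M N (2 * i) = M := by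
  simp [alternate]

@[simp]
lemma alternate_two_mul_add_one (M N : Finset (Sym2 V)) (i : ℕ) :
    alternate M N (2 * i + 1) = N := by
  simp [alternate, Nat.not_even_bit1]

lemma isMatchingOn_alternate {G : SimpleGraph V} {F : Finset V} {M N : Finset (Sym2 V)}
    (hM : IsMatchingOn G F M) (hN : IsMatchingOn G F N) (i : ℕ) :
    IsMatchingOn G F (alternate M N i) := by
  unfold alternate
  split <;> assumption

namespace IsMatchingOn

variable {G : SimpleGraph V} {F : Finset V} {M N : Finset (Sym2 V)}

/-- A repeated vertex would be met by two distinct edges of one matching; `p 0` cannot recur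
since it is `N`-exposed and its `M`-edge is already used. -/
lemma alternating_step_notMem (hM : IsMatchingOn G F M) (hN : IsMatchingOn G F N)
    {p : ℕ → V} {k : ℕ} {w : V} (hstart : p 0 ∉ mSupp N) (hinj : Set.InjOn p (Set.Iic k))
    (hpath : ∀ i < k, s(p i, p (i + 1)) ∈ alternate M N i)
    (hw : s(p k, w) ∈ alternate M N k) :
    w ∉ p '' Set.Iic k := by
  have halt := isMatchingOn_alternate hM hN
  have hinj' : ∀ i j, i ≤ k → j ≤ k → p i = p j → i = j := fun i j hi hj h => hinj hi hj h
  rintro ⟨j, hj, rfl⟩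
  rw [Set.mem_Iic] at hj
  rw [Sym2.eq_swap] at hw
  obtain rfl | hjk := hj.eq_or_lt
  · exact ((halt j).adj hw).ne rfl
  obtain rfl | hj0 := j.eq_zero_or_pos
  · by_cases hk : Even k
    · have h1 : s(p 0, p 1) ∈ alternate M N k := by
        rw [alternate_congr (j := 0) (by simp [hk])]
        exact hpath 0 hjk
      have := hinj' _ _ hjk le_rfl ((halt k).right_eq h1 hw)
      subst this
      exact Nat.not_even_one hk
    · exact hstart ⟨_, by simpa [alternate, hk] using hw, Sym2.mem_mk_left _ _⟩
  by_cases hpar : Even k ↔ Even j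
  · have hnext : s(p j, p (j + 1)) ∈ alternate M N k :=
      alternate_congr hpar ▸ hpath j hjk
    have := hinj' _ _ (by omega) le_rfl ((halt k).right_eq hnext hw)
    subst this
    rw [Nat.even_add_one] at hpar
    exact iff_not_self hpar.symm
  · have hprev : s(p j, p (j - 1)) ∈ alternate M N k := by
      rw [alternate_congr (j := j - 1) (by simp only [Nat.even_iff] at hpar ⊢; omega),
        Sym2.eq_swap, ← Nat.sub_add_cancel hj0]
      exact hpath (j - 1) (by omega)
    have := hinj' _ _ (by omega) le_rfl ((halt k).right_eq hprev hw)
    omega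

/-- The path is a component of `M ∆ N`; since it never revisits a vertex, it stops within
`card V` steps. -/
lemma exists_alternating_path [Fintype V] (hM : IsMatchingOn G F M) (hN : IsMatchingOn G F N)
    {v : V} (hv : v ∉ mSupp N) :
    ∃ (m : ℕ) (p : ℕ → V), p 0 = v ∧ Set.InjOn p (Set.Iic m) ∧
      (∀ i < m, s(p i, p (i + 1)) ∈ alternate M N i) ∧
      p m ∉ mSupp (alternate M N m) := by
  have grow : ∀ k, (∃ (m : ℕ) (p : ℕ → V), p 0 = v ∧ Set.InjOn p (Set.Iic m) ∧
      (∀ i < m, s(p i, p (i + 1)) ∈ alternate M N i) ∧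
      p m ∉ mSupp (alternate M N m)) ∨
      ∃ p : ℕ → V, p 0 = v ∧ Set.InjOn p (Set.Iic k) ∧
        ∀ i < k, s(p i, p (i + 1)) ∈ alternate M N i := by
    intro k
    induction k with
    | zero =>
      refine .inr ⟨fun _ => v, rfl, fun a ha b hb _ => ?_, by simp⟩
      simp only [Set.mem_Iic] at ha hb
      omega
    | succ k ih =>
      obtain h | ⟨p, hp0, hinj, hpath⟩ := ih
      · exact .inl h
      by_cases hk : p k ∈ mSupp (alternate M N k)
      · obtain ⟨e, he, hpk⟩ := hk
        obtain ⟨w, rfl⟩ := Sym2.mem_iff_exists.1 hpk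
        have hw := hM.alternating_step_notMem hN (hp0 ▸ hv) hinj hpath he
        refine .inr ⟨Function.update p (k + 1) w, (Function.update_of_ne (by omega) _ _).trans hp0,
          hinj.update_add_one hw, fun i hi => ?_⟩
        rw [Function.update_of_ne (by omega)]
        rcases (by omega : i < k ∨ i = k) with hi | rfl
        · rw [Function.update_of_ne (by omega)]
          exact hpath i hi
        · simpa using he
      · exact .inl ⟨k, p, hp0, hinj, hpath, hk⟩
  obtain h | ⟨p, -, hinj, -⟩ := grow (Fintype.card V)
  · exact h
  have := card_le_card_of_injOn p (s := range (Fintype.card V + 1)) (t := univ)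
    (fun _ _ => mem_univ _) (hinj.mono fun i hi => by simp at hi ⊢; omega)
  simp at this

/-- A form of Gallai's lemma. Follow the `M`–`N` alternating path from `y`: ending
`N`-exposed it would augment `N`; ending at an `M`-exposed vertex other than `x`, prefixed by
`x`, it would augment `M`. So it ends at `x`, and the edge `x y` closes an odd cycle. -/
lemma exists_odd_cycle_of_adj [Fintype V] [DecidableEq V] (hM : IsMatchingOn G F M)
    (hN : IsMatchingOn G F N) (hmax : ∀ M', IsMatchingOn G F M' → #M' ≤ #M) (hNM : #M ≤ #N)
    {x y : V} (hx : x ∉ mSupp M) (hy : y ∉ mSupp N) (hxF : x ∈ F) (hyF : y ∈ F)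
    (hxy : G.Adj x y) :
    ∃ (r : ℕ) (p : ℕ → V), 0 < r ∧ p 0 = y ∧ p (2 * r) = x ∧ Set.InjOn p (Set.Iic (2 * r)) ∧
      (∀ i < 2 * r, G.Adj (p i) (p (i + 1))) ∧ ∀ i < r, s(p (2 * i), p (2 * i + 1)) ∈ M := by
  obtain ⟨m, p, hp0, hinj, hpath, hend⟩ := hM.exists_alternating_path hN hy
  have halt := isMatchingOn_alternate hM hN
  have hadj : ∀ i < m, G.Adj (p i) (p (i + 1)) := fun i hi => (halt i).adj (hpath i hi)
  have hF : ∀ i ≤ m, p i ∈ F := by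
    rintro (_ | i) hi
    · exact hp0 ▸ hyF
    · exact (halt i).mem_of_mem (hpath i (by omega)) (Sym2.mem_mk_right _ _)
  obtain ⟨r, rfl | rfl⟩ := Nat.even_or_odd' m
  · have hpM : ∀ i < r, s(p (2 * i), p (2 * i + 1)) ∈ M := fun i hi => by
      simpa using hpath (2 * i) (by omega)
    rw [alternate_two_mul] at hend
    by_cases hpx : p (2 * r) = x
    · refine ⟨r, p, Nat.pos_of_ne_zero fun hr => ?_, hp0, hpx, hinj, hadj, hpM⟩
      subst hr
      exact hxy.ne (hpx.symm.trans hp0)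
    have hcov : ∀ i < 2 * r, p i ∈ mSupp M := fun i hi => by
      obtain ⟨j, rfl | rfl⟩ := Nat.even_or_odd' i
      exacts [⟨_, hpM j (by omega), Sym2.mem_mk_left _ _⟩,
        ⟨_, hpM j (by omega), Sym2.mem_mk_right _ _⟩]
    have hpx' : ∀ i ≤ 2 * r, p i ≠ x := fun i hi h => by
      rcases hi.lt_or_eq with hi | rfl
      exacts [hx (h ▸ hcov i hi), hpx h]
    let q : ℕ → V := fun | 0 => x | i + 1 => p i
    obtain ⟨M', hM', hcard⟩ := hM.exists_card_eq_add_one_of_augmenting r q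
      (by
        rintro (_ | a) ha (_ | b) hb hab
        · rfl
        · exact absurd hab.symm (hpx' b (by simp at hb; omega))
        · exact absurd hab (hpx' a (by simp at ha; omega))
        · exact congrArg (· + 1) (hinj (by simp at ha ⊢; omega) (by simp at hb ⊢; omega) hab))
      (by rintro (_ | i) hi; exacts [hxF, hF i (by omega)])
      (by rintro (_ | i) hi; exacts [show G.Adj x (p 0) from hp0 ▸ hxy, hadj i (by omega)])
      hx hend hpM
    have := hmax M' hM'
    omega
  · obtain ⟨N', hN', hcard⟩ := hN.exists_card_eq_add_one_of_augmenting r p hinj hF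
      (fun i hi => hadj i (by omega)) (hp0 ▸ hy)
      (by simpa using hend) (fun i hi => by simpa using hpath (2 * i + 1) (by omega))
    have := hmax N' hN'
    omega

end IsMatchingOn

lemma cycleGraph_isContained_of_injOn {G : SimpleGraph V} {p : ℕ → V} {m : ℕ}
    (hinj : Set.InjOn p (Set.Iic m)) (hadj : ∀ i < m, G.Adj (p i) (p (i + 1)))
    (hclose : G.Adj (p m) (p 0)) : cycleGraph (m + 1) ⊑ G := by
  have hstep : ∀ a b : Fin (m + 1), (b - a).val = 1 → G.Adj (p a) (p b) := by
    intro a b hab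
    rcases le_or_gt a b with h | h
    · rw [Fin.coe_sub_iff_le.2 h] at hab
      have : b.val = a.val + 1 := by omega
      rw [this]
      exact hadj a (by omega)
    · rw [Fin.coe_sub_iff_lt.2 h] at hab
      have ha : a.val = m := by omega
      have hb : b.val = 0 := by omega
      rw [ha, hb]
      exact hclose
  refine ⟨⟨⟨fun i => p i, fun {a b} hab => ?_⟩, fun a b hab => ?_⟩⟩
  · rcases cycleGraph_adj'.1 hab with h | h
    exacts [(hstep b a h).symm, hstep a b h]
  · exact Fin.ext (hinj (Set.mem_Iic.2 (Nat.lt_succ_iff.1 a.2))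
      (Set.mem_Iic.2 (Nat.lt_succ_iff.1 b.2)) hab)

lemma SimpleGraph.Walk.IsCycle.length_le_card [Fintype V] {G : SimpleGraph V} {v : V}
    {w : G.Walk v v} (hw : w.IsCycle) : w.length ≤ Fintype.card V := by
  have := hw.isPath_tail.length_lt
  rw [← Walk.length_tail_add_one hw.not_nil]
  omega

lemma Finset.card_eq_card_add_card_toLeft_inter_toRight [Fintype V] [DecidableEq V]
    {F : Finset (V ⊕ V)} (h : ∀ a, Sum.inl a ∈ F ∨ Sum.inr a ∈ F) :
    #F = Fintype.card V + #(F.toLeft ∩ F.toRight) := by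
  have huniv : F.toLeft ∪ F.toRight = univ := eq_univ_of_forall fun a => by simpa using h a
  rw [← card_toLeft_add_card_toRight, ← card_union_add_card_inter, huniv, card_univ]

section Whisker

open Sum

variable {H : SimpleGraph V} {a b : V}

@[simp]
lemma whisker_adj_inl_inl : (whisker H).Adj (inl a) (inl b) ↔ H.Adj a b := by
  simp [whisker]

@[simp]
lemma whisker_adj_inl_inr : (whisker H).Adj (inl a) (inr b) ↔ a = b := by
  simp [whisker, eq_comm]

@[simp]
lemma whisker_adj_inr_inl : (whisker H).Adj (inr a) (inl b) ↔ a = b := by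
  simp [whisker, eq_comm]

@[simp]
lemma whisker_not_adj_inr_inr : ¬(whisker H).Adj (inr a) (inr b) := by
  simp [whisker]

lemma whisker_adj_inr_iff {x : V ⊕ V} : (whisker H).Adj (inr a) x ↔ x = inl a := by
  cases x <;> simp [eq_comm]

lemma whisker_exists_inl_mem {e : Sym2 (V ⊕ V)} (he : e ∈ (whisker H).edgeSet) :
    ∃ c, inl c ∈ e := by
  induction e using Sym2.ind with
  | _ x y =>
    rcases x with c | c
    · exact ⟨c, Sym2.mem_mk_left _ _⟩
    · exact ⟨c, (whisker_adj_inr_iff.1 he) ▸ Sym2.mem_mk_right _ _⟩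

/-- A whisker vertex has a single neighbour, so it is never an inner vertex of a path. -/
lemma whisker_isLeft_of_path {p : ℕ → V ⊕ V} {m : ℕ} (hinj : Set.InjOn p (Set.Iic m))
    (hadj : ∀ i < m, (whisker H).Adj (p i) (p (i + 1))) (h0 : (p 0).isLeft)
    (hm : (p m).isLeft) : ∀ i ≤ m, (p i).isLeft := by
  intro i hi
  rcases Nat.eq_zero_or_pos i with rfl | hi0
  · exact h0
  rcases hi.eq_or_lt with rfl | him
  · exact hm
  cases hpi : p i with
  | inl c => rfl
  | inr c =>
    have hprev := hadj (i - 1) (by omega)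
    rw [Nat.sub_add_cancel hi0, hpi] at hprev
    have hnext := hadj i him
    rw [hpi, whisker_adj_inr_iff] at hnext
    have := hinj (Set.mem_Iic.2 (by omega)) (Set.mem_Iic.2 (by omega))
      ((whisker_adj_inr_iff.1 hprev.symm).trans hnext.symm)
    omega

lemma exists_isCycle_of_whisker_cycle {p : ℕ → V ⊕ V} {m : ℕ} (hm : 2 ≤ m)
    (hinj : Set.InjOn p (Set.Iic m)) (hleft : ∀ i ≤ m, (p i).isLeft)
    (hadj : ∀ i < m, (whisker H).Adj (p i) (p (i + 1))) (hclose : (whisker H).Adj (p m) (p 0)) :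
    ∃ (v : V) (w : H.Walk v v), w.IsCycle ∧ w.length = m + 1 := by
  set u : ℕ → V := fun i => (p i).elim id id
  have hu : ∀ i ≤ m, p i = inl (u i) := fun i hi => by
    obtain ⟨c, hc⟩ := Sum.isLeft_iff.1 (hleft i hi)
    simp [u, hc]
  refine (cycleGraph_isContained_iff (by omega)).1 (cycleGraph_isContained_of_injOn (p := u)
    (fun i hi j hj hij => hinj hi hj ?_) (fun i hi => ?_) ?_)
  · rw [hu i hi, hu j hj, hij]
  · simpa [hu i hi.le, hu (i + 1) hi] using hadj i hi
  · simpa [hu m le_rfl, hu 0 (by omega)] using hclose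

lemma IsMatchingOn.card_le_fintype_card [Fintype V] {F : Finset (V ⊕ V)}
    {M : Finset (Sym2 (V ⊕ V))} (hM : IsMatchingOn (whisker H) F M) : #M ≤ Fintype.card V :=
  (hM.card_le_card_of_forall_exists_mem (S := univ.map ⟨inl, inl_injective⟩) fun e he =>
    let ⟨c, hc⟩ := whisker_exists_inl_mem (hM.1 e he)
    ⟨inl c, by simp, hc⟩).trans (by simp)

variable [DecidableEq V]

lemma isMatchingOn_whiskers {F : Finset (V ⊕ V)} (S : Finset V)
    (hS : ∀ a ∈ S, inl a ∈ F ∧ inr a ∈ F) :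
    IsMatchingOn (whisker H) F (S.image fun a => s(inl a, inr a)) ∧
      #(S.image fun a => s(inl a, inr a)) = #S := by
  refine ⟨⟨?_, ?_, ?_⟩, card_image_of_injective _ fun a b h => by simpa using h⟩ <;>
    simp only [mem_image, forall_exists_index, and_imp, forall_apply_eq_imp_iff₂]
  · simp
  · intro a ha v hv
    rcases Sym2.mem_iff.1 hv with rfl | rfl
    exacts [(hS a ha).1, (hS a ha).2]
  · intro a _ b _ hne v hv hv'
    rcases Sym2.mem_iff.1 hv with rfl | rfl <;> simp_all

lemma IsMatchingOn.card_le_card_toLeft_inter_toRight {F : Finset (V ⊕ V)}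
    {M : Finset (Sym2 (V ⊕ V))} (hM : IsMatchingOn (whisker H) F M)
    (hF : ∀ a b, H.Adj a b → inr a ∈ F ∨ inr b ∈ F) :
    #M ≤ #(F.toLeft ∩ F.toRight) := by
  refine (hM.card_le_card_of_forall_exists_mem (S := (F.toLeft ∩ F.toRight).map
    ⟨inl, inl_injective⟩) fun e he => ?_).trans (card_map _).le
  have hmem : ∀ x ∈ e, x ∈ F := fun x hx => hM.mem_of_mem he hx
  induction e using Sym2.ind with
  | _ x y =>
    have hxy := hM.adj he
    rcases x with a | a <;> rcases y with b | b
    · rcases hF a b (by simpa using hxy) with h | h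
      · exact ⟨inl a, by simpa using ⟨hmem _ (Sym2.mem_mk_left _ _), h⟩, Sym2.mem_mk_left _ _⟩
      · exact ⟨inl b, by simpa using ⟨hmem _ (Sym2.mem_mk_right _ _), h⟩, Sym2.mem_mk_right _ _⟩
    · obtain rfl : a = b := by simpa using hxy
      exact ⟨inl a, by simpa using ⟨hmem _ (Sym2.mem_mk_left _ _), hmem _ (Sym2.mem_mk_right _ _)⟩,
        Sym2.mem_mk_left _ _⟩
    · obtain rfl : a = b := by simpa using hxy
      exact ⟨inl a, by simpa using ⟨hmem _ (Sym2.mem_mk_right _ _), hmem _ (Sym2.mem_mk_left _ _)⟩,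
        Sym2.mem_mk_right _ _⟩
    · simp at hxy

lemma MFFace.card_toLeft_inter_toRight_lt {q : ℕ} {F : Finset (V ⊕ V)}
    (hF : MFFace (whisker H) q F) : #(F.toLeft ∩ F.toRight) < q := by
  obtain ⟨hM, hMcard⟩ := isMatchingOn_whiskers (H := H) (F.toLeft ∩ F.toRight)
    fun a ha => by simpa using ha
  exact hMcard ▸ hF.card_lt hM

lemma IsFacet.exists_exposed_inl_of_inr_notMem {q : ℕ} {F : Finset (V ⊕ V)}
    (hF : IsFacet (MFFace (whisker H) q) F) (ha : inr a ∉ F) :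
    inl a ∈ F ∧ ∃ M, IsMatchingOn (whisker H) F M ∧ inl a ∉ mSupp M ∧ #M + 1 = q := by
  obtain ⟨w, M, hw, hwF, hwM, hM, hMq⟩ := hF.exists_adj_exposed_of_notMem ha
  obtain rfl := whisker_adj_inr_iff.1 hw
  exact ⟨hwF, M, hM, hwM, hMq⟩

variable [Fintype V]

/-- The `r` cycle edges use `2r` original vertices, and every other edge of `M` needs an
original vertex of its own, off the cycle and different from the exposed `p (2r)`. -/
lemma IsMatchingOn.card_add_le_of_whisker_cycle {F : Finset (V ⊕ V)}
    {M : Finset (Sym2 (V ⊕ V))} (hM : IsMatchingOn (whisker H) F M) {p : ℕ → V ⊕ V} {r : ℕ}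
    (hinj : Set.InjOn p (Set.Iic (2 * r))) (hleft : ∀ i ≤ 2 * r, (p i).isLeft)
    (hexp : p (2 * r) ∉ mSupp M) (hcyc : ∀ i < r, s(p (2 * i), p (2 * i + 1)) ∈ M) :
    r ≤ #M ∧ #M + r + 1 ≤ Fintype.card V := by
  have hinj' : ∀ i j, i ≤ 2 * r → j ≤ 2 * r → p i = p j → i = j := fun i j hi hj h => hinj hi hj h
  set C := (range r).image fun i => s(p (2 * i), p (2 * i + 1))
  have hCM : C ⊆ M := by
    simp only [C, image_subset_iff, mem_range]
    exact hcyc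
  have hC : #C = r := by
    rw [card_image_of_injOn, card_range]
    intro i hi j hj hij
    simp only [coe_range, Set.mem_Iio] at hi hj
    rcases Sym2.eq_iff.1 hij with ⟨h, -⟩ | ⟨h, -⟩ <;> have := hinj' _ _ (by omega) (by omega) h
      <;> omega
  set P := (range (2 * r + 1)).image p
  have hP : #P = 2 * r + 1 := by
    rw [card_image_of_injOn (hinj.mono fun i hi => by simp at hi ⊢; omega), card_range]
  have hPleft : P ⊆ univ.map .inl := by
    simp only [P, image_subset_iff, mem_range, mem_map, mem_univ, true_and]
    exact fun i hi => (Sum.isLeft_iff.1 (hleft i (by omega))).imp fun _ => Eq.symm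
  have hcover : ∀ e ∈ M \ C, ∃ v ∈ univ.map .inl \ P, v ∈ e := by
    intro e he
    obtain ⟨heM, heC⟩ := mem_sdiff.1 he
    obtain ⟨c, hc⟩ := whisker_exists_inl_mem (hM.1 e heM)
    refine ⟨inl c, mem_sdiff.2 ⟨by simp, fun hcP => ?_⟩, hc⟩
    obtain ⟨j, hj, hpj⟩ := mem_image.1 hcP
    rw [mem_range] at hj
    rcases (by omega : j = 2 * r ∨ j < 2 * r) with rfl | hj
    · exact hexp ⟨e, heM, hpj ▸ hc⟩
    obtain ⟨k, hk⟩ : ∃ k < r, p j ∈ s(p (2 * k), p (2 * k + 1)) := by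
      obtain ⟨k, rfl | rfl⟩ := Nat.even_or_odd' j
      exacts [⟨k, by omega, Sym2.mem_mk_left _ _⟩, ⟨k, by omega, Sym2.mem_mk_right _ _⟩]
    refine heC ((hM.eq_of_mem heM (hcyc k hk.1) (hpj ▸ hc) hk.2) ▸ ?_)
    exact mem_image.2 ⟨k, mem_range.2 hk.1, rfl⟩
  have hoff := (hM.subset sdiff_subset).card_le_card_of_forall_exists_mem hcover
  rw [card_sdiff_of_subset hCM, card_sdiff_of_subset hPleft, hC, hP, card_map, card_univ] at hoff
  have := hC ▸ card_le_card hCM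
  have := hP ▸ card_le_card hPleft
  rw [card_map, card_univ] at this
  omega

/-- Both `a` and `b` are exposed by maximum matchings of `W(H)[F]`, so Gallai's lemma puts them
on an odd cycle of `H`, and the counting bounds its length. -/
lemma IsFacet.exists_odd_cycle_of_adj {q : ℕ} {F : Finset (V ⊕ V)}
    (hF : IsFacet (MFFace (whisker H) q) F) (hab : H.Adj a b) (ha : inr a ∉ F)
    (hb : inr b ∉ F) :
    ∃ r, (∃ (v : V) (w : H.Walk v v), w.IsCycle ∧ w.length = 2 * r + 1) ∧
      r < q ∧ q + r ≤ Fintype.card V := by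
  obtain ⟨haF, Ma, hMa, hxa, hMaq⟩ := hF.exists_exposed_inl_of_inr_notMem ha
  obtain ⟨hbF, Mb, hMb, hyb, hMbq⟩ := hF.exists_exposed_inl_of_inr_notMem hb
  have hmax : ∀ M', IsMatchingOn (whisker H) F M' → #M' ≤ #Ma := fun M' hM' => by
    have := hF.1.card_lt hM'
    omega
  obtain ⟨r, p, hr, hp0, hpr, hinj, hadj, hcyc⟩ :=
    hMa.exists_odd_cycle_of_adj hMb hmax (by omega) hxa hyb haF hbF (by simpa using hab)
  have hleft := whisker_isLeft_of_path hinj hadj (by simp [hp0]) (by simp [hpr])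
  obtain ⟨hrM, hMr⟩ := hMa.card_add_le_of_whisker_cycle hinj hleft (hpr ▸ hxa) hcyc
  refine ⟨r, exists_isCycle_of_whisker_cycle (by omega) hinj hleft hadj ?_, by omega, by omega⟩
  simpa [hp0, hpr] using hab

end Whisker

theorem mfComplex_pure_of_oddCycle_range_general
    {V : Type*} [Fintype V] [DecidableEq V] (H : SimpleGraph V)
    (n : ℕ) (hn : Fintype.card V = n) (ℓ : ℕ)
    (hcyc : ∃ (v : V) (w : H.Walk v v), w.IsCycle ∧ w.length = ℓ)
    (hmin : ∀ (v : V) (w : H.Walk v v), w.IsCycle → Odd w.length → ℓ ≤ w.length)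
    (ν : ℕ)
    (hν₁ : ∃ M : Finset (Sym2 (V ⊕ V)),
      IsMatchingOn (whisker H) Finset.univ M ∧ M.card = ν)
    (q : ℕ) (hq : (1 ≤ q ∧ q < (ℓ + 1) / 2) ∨ (n - ℓ / 2 < q ∧ q ≤ ν)) :
    ∀ F : Finset (V ⊕ V), IsFacet (MFFace (whisker H) q) F →
      F.card = n + q - 1 := by
  intro F hF
  subst hn
  have hqn : q ≤ Fintype.card V := by
    obtain ⟨v, w, hw, rfl⟩ := hcyc
    obtain ⟨M, hM, rfl⟩ := hν₁
    have := hw.length_le_card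
    have := hM.card_le_fintype_card
    omega
  have hno : ∀ a b, H.Adj a b → Sum.inr a ∈ F ∨ Sum.inr b ∈ F := by
    by_contra! ⟨a, b, hab, ha, hb⟩
    obtain ⟨r, ⟨v, w, hw, hwr⟩, hrq, hqr⟩ := hF.exists_odd_cycle_of_adj hab ha hb
    have := hwr ▸ hmin v w hw (hwr ▸ odd_two_mul_add_one r)
    omega
  have hcard := card_eq_card_add_card_toLeft_inter_toRight fun a =>
    or_iff_not_imp_right.2 fun h => (hF.exists_exposed_inl_of_inr_notMem h).1
  have hlt := hF.1.card_toLeft_inter_toRight_lt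
  obtain ⟨v, hv⟩ : ∃ v, v ∉ F := by
    by_contra! h
    rw [eq_univ_of_forall h] at hlt
    simp only [toLeft_univ, toRight_univ, inter_self, card_univ] at hlt
    omega
  obtain ⟨-, M, -, -, -, hM, hMq⟩ := hF.exists_adj_exposed_of_notMem hv
  have := hM.card_le_card_toLeft_inter_toRight hno
  omega

/-- if `H` contains an odd cycle, `ℓ` is the length of a shortest odd
cycle, and `1 ≤ q < ⌈ℓ/2⌉` or `n - ⌊ℓ/2⌋ < q ≤ ν(G)`, then `MF^q(W(H))` is pure:
every facet has cardinality `n + q - 1`. -/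
theorem mfComplex_pure_of_oddCycle_range
    {V : Type*} [Fintype V] [DecidableEq V] (H : SimpleGraph V)
    (n : ℕ) (hn : Fintype.card V = n) (ℓ : ℕ) (hodd : Odd ℓ)
    (hcyc : ∃ (v : V) (w : H.Walk v v), w.IsCycle ∧ w.length = ℓ)
    (hmin : ∀ (v : V) (w : H.Walk v v), w.IsCycle → Odd w.length → ℓ ≤ w.length)
    (ν : ℕ)
    (hν₁ : ∃ M : Finset (Sym2 (V ⊕ V)),
      IsMatchingOn (whisker H) Finset.univ M ∧ M.card = ν)
    (hν₂ : ∀ M : Finset (Sym2 (V ⊕ V)),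
      IsMatchingOn (whisker H) Finset.univ M → M.card ≤ ν)
    (q : ℕ) (hq : (1 ≤ q ∧ q < (ℓ + 1) / 2) ∨ (n - ℓ / 2 < q ∧ q ≤ ν)) :
    ∀ F : Finset (V ⊕ V), IsFacet (MFFace (whisker H) q) F →
      F.card = n + q - 1 :=
  mfComplex_pure_of_oddCycle_range_general H n hn ℓ hcyc hmin ν hν₁ q hq
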